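/- Consider two INGARCH(1,1)-type recursions λ_{1t} = μ₁(t/T) + a₁₁(t/T)X_{t−1} + b₁₁(t/T)λ_{1,t−1} and λ_{0t} = μ₀(t/T) + a₀₁(t/T)X_{t−1} + b₀₁(t/T)λ_{0,t−1} with sup_t b₁₁(t/T) ≤ 1 − M_μ/M_X for 0 < M_μ < M_X. Then Σ_{t=1}^T |λ_{1t} − λ_{0t}| ≤ (M_X/M_μ)[T‖μ₁−μ₀‖_∞ + (Σ_t X_{t−1})‖a₁₁−a₀₁‖_∞ + (1 − M_μ/M_X)|λ_{10} − λ_{00}| + (Σ_t λ_{0,t−1})‖b₁₁−b₀₁‖_∞]. -/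

import Mathlib

/-
Subtracting the two recursions gives the one-step bound `D t ≤ c t + r D (t-1)`
for `D t = |λ₁ₜ - λ₀ₜ|` and `r = 1 - M_μ/M_X`. Summing over `t` and reindexing
`∑ D (t-1) = D 0 + ∑ D t - D T` puts the sum `S = ∑ D t` on both sides, leaving
`(1 - r) S ≤ ∑ c t + r D 0`; dividing by `1 - r = M_μ/M_X` gives the claim.
-/

open Finset

lemma abs_sub_ingarch_step_le {μ₁ μ₀ a₁ a₀ b₁ b₀ x l₁ l₀ : ℝ}
    (hx : 0 ≤ x) (hl₀ : 0 ≤ l₀) (hb₁ : 0 ≤ b₁) :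
    |(μ₁ + a₁ * x + b₁ * l₁) - (μ₀ + a₀ * x + b₀ * l₀)|
      ≤ |μ₁ - μ₀| + x * |a₁ - a₀| + b₁ * |l₁ - l₀| + l₀ * |b₁ - b₀| := by
  have hsplit : (μ₁ + a₁ * x + b₁ * l₁) - (μ₀ + a₀ * x + b₀ * l₀)
      = (μ₁ - μ₀) + (a₁ - a₀) * x + b₁ * (l₁ - l₀) + (b₁ - b₀) * l₀ := by ring
  rw [hsplit]
  calc _ ≤ |μ₁ - μ₀| + |(a₁ - a₀) * x| + |b₁ * (l₁ - l₀)|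
          + |(b₁ - b₀) * l₀| := by
        refine (abs_add_le _ _).trans (add_le_add_left ?_ _)
        refine (abs_add_le _ _).trans (add_le_add_left ?_ _)
        exact abs_add_le _ _
    _ = _ := by
        rw [abs_mul, abs_mul, abs_mul, abs_of_nonneg hx, abs_of_nonneg hl₀, abs_of_nonneg hb₁]
        ring

lemma sum_Icc_comp_pred_add (D : ℕ → ℝ) (T : ℕ) :
    ∑ t ∈ Icc 1 T, D (t - 1) + D T = D 0 + ∑ t ∈ Icc 1 T, D t := by
  induction T with
  | zero => simp
  | succ T ih =>
    rw [sum_Icc_succ_top (Nat.le_add_left 1 T), sum_Icc_succ_top (Nat.le_add_left 1 T),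
      Nat.add_sub_cancel]
    linarith

lemma one_sub_mul_sum_Icc_le_of_le_add_mul_pred {D c : ℕ → ℝ} {r : ℝ} {T : ℕ}
    (hD : ∀ t, 0 ≤ D t) (hr : 0 ≤ r)
    (hstep : ∀ t ∈ Icc 1 T, D t ≤ c t + r * D (t - 1)) :
    (1 - r) * ∑ t ∈ Icc 1 T, D t ≤ ∑ t ∈ Icc 1 T, c t + r * D 0 := by
  have hsum :
      ∑ t ∈ Icc 1 T, D t ≤ ∑ t ∈ Icc 1 T, c t + r * ∑ t ∈ Icc 1 T, D (t - 1) := by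
    rw [mul_sum, ← sum_add_distrib]
    exact sum_le_sum hstep
  linear_combination hsum + r * sum_Icc_comp_pred_add D T + mul_nonneg hr (hD T)

theorem stmt_16_general (T : ℕ) (X lam1 lam0 : ℕ → ℝ)
    (μ1 μ0 a11 a01 b11 b01 : ℝ → ℝ) (Mμ MX : ℝ)
    (hMμ : 0 < Mμ) (hMX : Mμ < MX)
    (hX : ∀ t, 0 ≤ X t) (hl0 : ∀ t, 0 ≤ lam0 t)
    (hrec1 : ∀ t, 1 ≤ t → t ≤ T →
      lam1 t = μ1 ((t : ℝ) / T) + a11 ((t : ℝ) / T) * X (t - 1)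
        + b11 ((t : ℝ) / T) * lam1 (t - 1))
    (hrec0 : ∀ t, 1 ≤ t → t ≤ T →
      lam0 t = μ0 ((t : ℝ) / T) + a01 ((t : ℝ) / T) * X (t - 1)
        + b01 ((t : ℝ) / T) * lam0 (t - 1))
    (hbnn : ∀ t, 1 ≤ t → t ≤ T → 0 ≤ b11 ((t : ℝ) / T))
    (hb : ∀ t, 1 ≤ t → t ≤ T → b11 ((t : ℝ) / T) ≤ 1 - Mμ / MX)
    (dμ da db : ℝ)
    (hdμ : ∀ t, 1 ≤ t → t ≤ T → |μ1 ((t : ℝ) / T) - μ0 ((t : ℝ) / T)| ≤ dμ)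
    (hda : ∀ t, 1 ≤ t → t ≤ T → |a11 ((t : ℝ) / T) - a01 ((t : ℝ) / T)| ≤ da)
    (hdb : ∀ t, 1 ≤ t → t ≤ T → |b11 ((t : ℝ) / T) - b01 ((t : ℝ) / T)| ≤ db) :
    ∑ t ∈ Finset.Icc 1 T, |lam1 t - lam0 t|
      ≤ (MX / Mμ) * ((T : ℝ) * dμ
          + (∑ t ∈ Finset.Icc 1 T, X (t - 1)) * da
          + (1 - Mμ / MX) * |lam1 0 - lam0 0|
          + (∑ t ∈ Finset.Icc 1 T, lam0 (t - 1)) * db) := by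
  have hq : 0 < Mμ / MX := div_pos hMμ (hMμ.trans hMX)
  have hr : 0 ≤ 1 - Mμ / MX := by
    rw [sub_nonneg, div_le_one (hMμ.trans hMX)]
    exact hMX.le
  have hstep : ∀ t ∈ Icc 1 T, |lam1 t - lam0 t|
      ≤ (dμ + X (t - 1) * da + lam0 (t - 1) * db)
        + (1 - Mμ / MX) * |lam1 (t - 1) - lam0 (t - 1)| := by
    intro t ht
    obtain ⟨h1, h2⟩ := mem_Icc.mp ht
    rw [hrec1 t h1 h2, hrec0 t h1 h2]
    refine (abs_sub_ingarch_step_le (hX _) (hl0 _) (hbnn t h1 h2)).trans ?_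
    have hXa := mul_le_mul_of_nonneg_left (hda t h1 h2) (hX (t - 1))
    have hbD := mul_le_mul_of_nonneg_right (hb t h1 h2) (abs_nonneg (lam1 (t - 1) - lam0 (t - 1)))
    have hlb := mul_le_mul_of_nonneg_left (hdb t h1 h2) (hl0 (t - 1))
    linarith [hdμ t h1 h2]
  have hbound := one_sub_mul_sum_Icc_le_of_le_add_mul_pred (fun t => abs_nonneg _) hr hstep
  simp only [sum_add_distrib, sum_const, Nat.card_Icc, Nat.add_sub_cancel, nsmul_eq_mul,
    ← sum_mul, sub_sub_cancel] at hbound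
  have hS := (le_inv_mul_iff₀ hq).mpr hbound
  rw [inv_div] at hS
  linarith

/-- Comparison of two INGARCH(1,1)-type recursions: the summed absolute difference
of the intensities is controlled by the sup-norm distances of the coefficient
functions and the initial difference. -/
theorem stmt_16 (T : ℕ) (X lam1 lam0 : ℕ → ℝ)
    (μ1 μ0 a11 a01 b11 b01 : ℝ → ℝ) (Mμ MX : ℝ)
    (hMμ : 0 < Mμ) (hMX : Mμ < MX)
    (hX : ∀ t, 0 ≤ X t) (hl1 : ∀ t, 0 ≤ lam1 t) (hl0 : ∀ t, 0 ≤ lam0 t)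
    (hrec1 : ∀ t, 1 ≤ t → t ≤ T →
      lam1 t = μ1 ((t : ℝ) / T) + a11 ((t : ℝ) / T) * X (t - 1)
        + b11 ((t : ℝ) / T) * lam1 (t - 1))
    (hrec0 : ∀ t, 1 ≤ t → t ≤ T →
      lam0 t = μ0 ((t : ℝ) / T) + a01 ((t : ℝ) / T) * X (t - 1)
        + b01 ((t : ℝ) / T) * lam0 (t - 1))
    (hbnn : ∀ t, 1 ≤ t → t ≤ T → 0 ≤ b11 ((t : ℝ) / T))
    (hb : ∀ t, 1 ≤ t → t ≤ T → b11 ((t : ℝ) / T) ≤ 1 - Mμ / MX)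
    (dμ da db : ℝ)
    (hdμ : ∀ t, 1 ≤ t → t ≤ T → |μ1 ((t : ℝ) / T) - μ0 ((t : ℝ) / T)| ≤ dμ)
    (hda : ∀ t, 1 ≤ t → t ≤ T → |a11 ((t : ℝ) / T) - a01 ((t : ℝ) / T)| ≤ da)
    (hdb : ∀ t, 1 ≤ t → t ≤ T → |b11 ((t : ℝ) / T) - b01 ((t : ℝ) / T)| ≤ db) :
    ∑ t ∈ Finset.Icc 1 T, |lam1 t - lam0 t|
      ≤ (MX / Mμ) * ((T : ℝ) * dμ
          + (∑ t ∈ Finset.Icc 1 T, X (t - 1)) * da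
          + (1 - Mμ / MX) * |lam1 0 - lam0 0|
          + (∑ t ∈ Finset.Icc 1 T, lam0 (t - 1)) * db) :=
  stmt_16_general T X lam1 lam0 μ1 μ0 a11 a01 b11 b01 Mμ MX hMμ hMX hX hl0 hrec1 hrec0 hbnn hb dμ da
    db hdμ hda hdb
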